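/- Let 𝓑 be a basis of a Banach space X, 𝐧 a strictly increasing sequence of positive integers, and ω a weight on subsets of ℕ. The following are equivalent: (i) 𝓑 is ω-(𝐧, strong partially greedy); (ii) 𝓑 is quasi-greedy and ω-(𝐧, PSLC); (iii) 𝓑 is quasi-greedy and ω-(𝐧, superconservative); (iv) 𝓑 is quasi-greedy and ω-(𝐧, conservative). -/

import Mathlib

open scoped BigOperators ENNReal NNReal

/-- The collection `𝕋(𝐧)`: pairs of finite sets `(A, D)` with `A ⊆ 𝐧`, `|A| ≤ |D|`
and `A < D ∩ 𝐧`. -/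
def TPair (seq : ℕ → ℕ) (A D : Finset ℕ) : Prop :=
  (↑A : Set ℕ) ⊆ Set.range seq ∧ A.card ≤ D.card ∧
    ∀ a ∈ A, ∀ d ∈ D, d ∈ Set.range seq → a < d

/-- The collection `𝕊(𝐧)`: pairs of finite sets `(A, D)` with `A ⊆ 𝐧` and `|A| ≤ |D|`. -/
def SPair (seq : ℕ → ℕ) (A D : Finset ℕ) : Prop :=
  (↑A : Set ℕ) ⊆ Set.range seq ∧ A.card ≤ D.card

/-- The interval `{n_{k+1}, …, n_{k+m}}` of `m` consecutive terms of the sequence `seq`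
(0-indexed: `seq k, …, seq (k+m-1)`). -/
def intervalSet (seq : ℕ → ℕ) (k m : ℕ) : Finset ℕ :=
  (Finset.range m).image fun i => seq (k + i)

/-- The (1-based) index `ι(max A)` of the largest element of `A` in the sequence `seq`
(`0` if `A` is empty). -/
noncomputable def iotaMax (seq : ℕ → ℕ) (A : Finset ℕ) : ℕ :=
  if h : A.Nonempty then sInf {i | seq i = A.max' h} + 1 else 0

/-- The collection `𝕋^ω(𝐧)`: pairs of finite sets `(A, D)` with `A ⊆ 𝐧`, `ω(A) ≤ ω(D)`
and `A < D ∩ 𝐧`. -/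
def WTPair (w : Set ℕ → ℝ≥0∞) (seq : ℕ → ℕ) (A D : Finset ℕ) : Prop :=
  (↑A : Set ℕ) ⊆ Set.range seq ∧ w (↑A : Set ℕ) ≤ w (↑D : Set ℕ) ∧
    ∀ a ∈ A, ∀ d ∈ D, d ∈ Set.range seq → a < d

/-- A (semi-normalized) basis `(e_n)` of a Banach space `X`, together with its biorthogonal
functionals `(e_n^*)`: the span of the `e_n` is norm-dense, `e_j^*(e_k) = δ_{jk}`, and the
norms of the `e_n` and `e_n^*` are bounded above and away from zero. -/
structure BasisOf (𝕜 : Type*) (X : Type*) [RCLike 𝕜] [NormedAddCommGroup X]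
    [NormedSpace 𝕜 X] where
  e : ℕ → X
  coord : ℕ → X →L[𝕜] 𝕜
  dense_span : Dense (↑(Submodule.span 𝕜 (Set.range e)) : Set X)
  biorth : ∀ j k : ℕ, coord j (e k) = if j = k then (1 : 𝕜) else 0
  norm_bounds : ∃ c₁ c₂ : ℝ, 0 < c₁ ∧ (∀ n, c₁ ≤ ‖e n‖ ∧ c₁ ≤ ‖coord n‖) ∧
    ∀ n, ‖e n‖ ≤ c₂ ∧ ‖coord n‖ ≤ c₂

namespace BasisOf

variable {𝕜 : Type*} {X : Type*} [RCLike 𝕜] [NormedAddCommGroup X] [NormedSpace 𝕜 X]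
variable (B : BasisOf 𝕜 X)

/-- The projection `P_A(x) = ∑_{n ∈ A} e_n^*(x) e_n`. -/
noncomputable def proj (A : Finset ℕ) (x : X) : X := ∑ n ∈ A, B.coord n x • B.e n

/-- `1_{εA} = ∑_{n ∈ A} ε_n e_n`. -/
noncomputable def sgnSum (ε : ℕ → 𝕜) (A : Finset ℕ) : X := ∑ n ∈ A, ε n • B.e n

/-- `1_A = ∑_{n ∈ A} e_n`. -/
noncomputable def ones (A : Finset ℕ) : X := ∑ n ∈ A, B.e n

/-- `P^𝐧_m(x) = ∑_{i=1}^m e_{n_i}^*(x) e_{n_i}`, the projection on the first `m` terms of the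
subsequence given by `seq`. -/
noncomputable def projSeq (seq : ℕ → ℕ) (m : ℕ) (x : X) : X :=
  ∑ i ∈ Finset.range m, B.coord (seq i) x • B.e (seq i)

/-- `A` is a greedy set of `x`: the coefficients inside `A` dominate those outside. -/
def IsGreedySet (x : X) (A : Finset ℕ) : Prop :=
  ∀ a ∈ A, ∀ b ∉ A, ‖B.coord b x‖ ≤ ‖B.coord a x‖

/-- The support `{n : e_n^*(x) ≠ 0}`. -/
def supp (x : X) : Set ℕ := {n | B.coord n x ≠ 0}

/-- `𝓑` is `C`-(`𝐧`, strong partially greedy):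
`‖x - G_m(x)‖ ≤ C ⋅ σ̂^𝐧_m(x)` for all `x`, all `m ≥ 1` and all greedy sums. -/
def SPGWith (seq : ℕ → ℕ) (C : ℝ) : Prop :=
  ∀ x : X, ∀ m : ℕ, 1 ≤ m → ∀ A : Finset ℕ, A.card = m → B.IsGreedySet x A →
    ∀ k : ℕ, k ≤ m → ‖x - B.proj A x‖ ≤ C * ‖x - B.projSeq seq k x‖

/-- `𝓑` is (`𝐧`, strong partially greedy). -/
def SPG (seq : ℕ → ℕ) : Prop := ∃ C : ℝ, 1 ≤ C ∧ B.SPGWith seq C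

/-- `𝓑` is quasi-greedy with constant `C`. -/
def QuasiGreedyWith (C : ℝ) : Prop :=
  ∀ x : X, ∀ A : Finset ℕ, A.Nonempty → B.IsGreedySet x A → ‖B.proj A x‖ ≤ C * ‖x‖

/-- `𝓑` is quasi-greedy. -/
def QuasiGreedy : Prop := ∃ C : ℝ, B.QuasiGreedyWith C

/-- `𝓑` is suppression quasi-greedy with constant `C`. -/
def SuppQGWith (C : ℝ) : Prop :=
  ∀ x : X, ∀ A : Finset ℕ, A.Nonempty → B.IsGreedySet x A → ‖x - B.proj A x‖ ≤ C * ‖x‖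

/-- `𝓑` is `C`-(`𝐧`, PSLC). -/
def PSLCWith (seq : ℕ → ℕ) (C : ℝ) : Prop :=
  ∀ x : X, (∀ n, ‖B.coord n x‖ ≤ 1) → ∀ A D : Finset ℕ, TPair seq A D →
    (∀ d ∈ D, B.coord d x = 0) →
    (∀ a ∈ A, ∀ j : ℕ, (j ∈ D ∨ B.coord j x ≠ 0) → j ∈ Set.range seq → a < j) →
    ∀ ε δ : ℕ → 𝕜, (∀ n, ‖ε n‖ = 1) → (∀ n, ‖δ n‖ = 1) →
      ‖x + B.sgnSum ε A‖ ≤ C * ‖x + B.sgnSum δ D‖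

/-- `𝓑` is (`𝐧`, PSLC). -/
def PSLC (seq : ℕ → ℕ) : Prop := ∃ C : ℝ, 1 ≤ C ∧ B.PSLCWith seq C

/-- `𝓑` is (`𝐧`, superconservative) with constant `C`. -/
def SuperconservativeWith (seq : ℕ → ℕ) (C : ℝ) : Prop :=
  ∀ A D : Finset ℕ, TPair seq A D →
    ∀ ε δ : ℕ → 𝕜, (∀ n, ‖ε n‖ = 1) → (∀ n, ‖δ n‖ = 1) →
      ‖B.sgnSum ε A‖ ≤ C * ‖B.sgnSum δ D‖

/-- `𝓑` is (`𝐧`, superconservative). -/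
def Superconservative (seq : ℕ → ℕ) : Prop :=
  ∃ C : ℝ, 0 < C ∧ B.SuperconservativeWith seq C

/-- `𝓑` is (`𝐧`, conservative) with constant `C`. -/
def ConservativeWith (seq : ℕ → ℕ) (C : ℝ) : Prop :=
  ∀ A D : Finset ℕ, TPair seq A D → ‖B.ones A‖ ≤ C * ‖B.ones D‖

/-- `𝓑` is (`𝐧`, conservative). -/
def Conservative (seq : ℕ → ℕ) : Prop := ∃ C : ℝ, 0 < C ∧ B.ConservativeWith seq C

/-- `𝓑` is (`𝐧`, democratic) with constant `C`. -/
def DemocraticWith (seq : ℕ → ℕ) (C : ℝ) : Prop :=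
  ∀ A D : Finset ℕ, SPair seq A D → ‖B.ones A‖ ≤ C * ‖B.ones D‖

/-- `𝓑` is (`𝐧`, democratic). -/
def Democratic (seq : ℕ → ℕ) : Prop := ∃ C : ℝ, B.DemocraticWith seq C

/-- `𝓑` is (`𝐧`, almost greedy) with constant `C`:
`‖x - G_m(x)‖ ≤ C σ̃^𝐧_m(x)` where `σ̃^𝐧_m(x) = inf {‖x - P_D(x)‖ : D ⊆ 𝐧, |D| = m}`. -/
def AlmostGreedyWith (seq : ℕ → ℕ) (C : ℝ) : Prop :=
  ∀ x : X, ∀ m : ℕ, 1 ≤ m → ∀ A : Finset ℕ, A.card = m → B.IsGreedySet x A →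
    ∀ D : Finset ℕ, (↑D : Set ℕ) ⊆ Set.range seq → D.card = m →
      ‖x - B.proj A x‖ ≤ C * ‖x - B.proj D x‖

/-- `𝓑` is (`𝐧`, almost greedy). -/
def AlmostGreedy (seq : ℕ → ℕ) : Prop := ∃ C : ℝ, 1 ≤ C ∧ B.AlmostGreedyWith seq C

/-- `𝓑` is 1-unconditional. -/
def OneUnconditional : Prop :=
  ∀ (F : Finset ℕ) (a b : ℕ → 𝕜), (∀ n, ‖a n‖ ≤ ‖b n‖) →
    ‖∑ n ∈ F, a n • B.e n‖ ≤ ‖∑ n ∈ F, b n • B.e n‖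

/-- `𝓑` is `C`-(`𝐧`, consecutive almost greedy) of type I. -/
def CAGIWith (seq : ℕ → ℕ) (C : ℝ) : Prop :=
  ∀ x : X, ∀ m : ℕ, 1 ≤ m → ∀ A : Finset ℕ, A.card = m → B.IsGreedySet x A →
    ∀ k : ℕ, ‖x - B.proj A x‖ ≤ C * ‖x - B.proj (intervalSet seq k m) x‖

/-- `𝓑` is `C`-(`𝐧`, consecutive almost greedy) of type II. -/
def CAGIIWith (seq : ℕ → ℕ) (C : ℝ) : Prop :=
  ∀ x : X, ∀ m : ℕ, 1 ≤ m → ∀ A : Finset ℕ, A.card = m → B.IsGreedySet x A →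
    ∀ k p : ℕ, ((↑(intervalSet seq k p) : Set ℕ) ∩ B.supp x).ncard ≤ m →
      ‖x - B.proj A x‖ ≤ C * ‖x - B.proj (intervalSet seq k p) x‖

/-- `𝓑` is `C`-(`𝐧`, RSLC). -/
def RSLCWith (seq : ℕ → ℕ) (C : ℝ) : Prop :=
  ∀ x : X, (∀ n, ‖B.coord n x‖ ≤ 1) → ∀ A D : Finset ℕ, SPair seq A D →
    (∀ d ∈ D, B.coord d x = 0) →
    (∀ j : ℕ, (j ∈ D ∨ B.coord j x ≠ 0) → j ∈ Set.range seq →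
      (∀ a ∈ A, j < a) ∨ (∀ a ∈ A, a < j)) →
    ∀ ε δ : ℕ → 𝕜, (∀ n, ‖ε n‖ = 1) → (∀ n, ‖δ n‖ = 1) →
      ‖x + B.sgnSum ε A‖ ≤ C * ‖x + B.sgnSum δ D‖

/-- `𝓑` is `C`-(`𝐧`, SLC). -/
def SLCWith (seq : ℕ → ℕ) (C : ℝ) : Prop :=
  ∀ x : X, (∀ n, ‖B.coord n x‖ ≤ 1) → ∀ A D : Finset ℕ, SPair seq A D →
    Disjoint A D → (∀ a ∈ A, B.coord a x = 0) → (∀ d ∈ D, B.coord d x = 0) →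
    ∀ ε δ : ℕ → 𝕜, (∀ n, ‖ε n‖ = 1) → (∀ n, ‖δ n‖ = 1) →
      ‖x + B.sgnSum ε A‖ ≤ C * ‖x + B.sgnSum δ D‖

/-- The Lebesgue-type parameter `L̂^𝐧_m`: the least constant `C ∈ [0,∞]` with
`‖x - G_m(x)‖ ≤ C σ̂^𝐧_m(x)` for all `x` and all greedy sums `G_m(x)`. -/
noncomputable def Lhat (seq : ℕ → ℕ) (m : ℕ) : ℝ≥0∞ :=
  sInf {C : ℝ≥0∞ | ∀ (x : X) (A : Finset ℕ), A.card = m → B.IsGreedySet x A →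
    ∀ k : ℕ, k ≤ m →
      (‖x - B.proj A x‖₊ : ℝ≥0∞) ≤ C * (‖x - B.projSeq seq k x‖₊ : ℝ≥0∞)}

/-- The parameter `g_m^c`. -/
noncomputable def gc (m : ℕ) : ℝ≥0∞ :=
  ⨆ (x : X) (_ : x ≠ 0) (A : Finset ℕ) (_ : A.card ≤ m) (_ : B.IsGreedySet x A),
    (‖x - B.proj A x‖₊ : ℝ≥0∞) / (‖x‖₊ : ℝ≥0∞)

/-- The parameter `g̃_m`. -/
noncomputable def gtilde (m : ℕ) : ℝ≥0∞ :=
  ⨆ (x : X) (_ : x ≠ 0) (A : Finset ℕ) (A' : Finset ℕ) (_ : A ⊆ A') (_ : A.card < A'.card)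
    (_ : A'.card ≤ m) (_ : B.IsGreedySet x A) (_ : B.IsGreedySet x A'),
    (‖B.proj A' x - B.proj A x‖₊ : ℝ≥0∞) / (‖x‖₊ : ℝ≥0∞)

/-- The parameter `sc^𝐧_m`. -/
noncomputable def scParam (seq : ℕ → ℕ) (m : ℕ) : ℝ≥0∞ :=
  ⨆ (A : Finset ℕ) (D : Finset ℕ) (_ : TPair seq A D) (_ : D.card ≤ m)
    (_ : ∀ a ∈ A, a ≤ seq (m - 1)) (ε : ℕ → 𝕜) (_ : ∀ n, ‖ε n‖ = 1)
    (δ : ℕ → 𝕜) (_ : ∀ n, ‖δ n‖ = 1),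
    (‖B.sgnSum ε A‖₊ : ℝ≥0∞) / (‖B.sgnSum δ D‖₊ : ℝ≥0∞)

/-- The parameter `ω^𝐧_m`. -/
noncomputable def omegaParam (seq : ℕ → ℕ) (m : ℕ) : ℝ≥0∞ :=
  ⨆ (x : X) (_ : ∀ n, ‖B.coord n x‖ ≤ 1) (A : Finset ℕ) (D : Finset ℕ)
    (_ : (↑A : Set ℕ) ⊆ Set.range seq) (_ : A.card ≤ D.card) (_ : D.card ≤ m)
    (_ : ∀ a ∈ A, a ≤ seq (m - 1)) (_ : ∀ d ∈ D, B.coord d x = 0)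
    (_ : ∀ a ∈ A, ∀ j : ℕ, (j ∈ D ∨ B.coord j x ≠ 0) → j ∈ Set.range seq → a < j)
    (ε : ℕ → 𝕜) (_ : ∀ n, ‖ε n‖ = 1) (δ : ℕ → 𝕜) (_ : ∀ n, ‖δ n‖ = 1),
    (‖x + B.sgnSum ε A‖₊ : ℝ≥0∞) / (‖x + B.sgnSum δ D‖₊ : ℝ≥0∞)

/-- The parameter `ω̂^𝐧_m`. -/
noncomputable def omegaHatParam (seq : ℕ → ℕ) (m : ℕ) : ℝ≥0∞ :=
  ⨆ (x : X) (_ : ∀ n, ‖B.coord n x‖ ≤ 1) (A : Finset ℕ) (D : Finset ℕ)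
    (_ : (↑A : Set ℕ) ⊆ Set.range seq) (_ : A.card ≤ D.card) (_ : D.card ≤ m)
    (_ : ∀ a ∈ A, a ≤ seq (m - 1))
    (_ : ∀ d ∈ D, B.coord d (x - B.proj A x) = 0)
    (_ : ∀ a ∈ A, ∀ j : ℕ, (j ∈ D ∨ B.coord j (x - B.proj A x) ≠ 0) →
      j ∈ Set.range seq → a < j)
    (ε : ℕ → 𝕜) (_ : ∀ n, ‖ε n‖ = 1),
    (‖x‖₊ : ℝ≥0∞) / (‖x - B.proj A x + B.sgnSum ε D‖₊ : ℝ≥0∞)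

/-- `κ = sup_{j,k} ‖e_j‖ ‖e_k^*‖`. -/
noncomputable def kappa : ℝ≥0∞ :=
  ⨆ (j : ℕ) (k : ℕ), ((‖B.e j‖₊ * ‖B.coord k‖₊ : ℝ≥0) : ℝ≥0∞)

/-- `𝓑` is `𝐬`-(`𝐧`, strong partially greedy) with constant `C`:
the strong partially greedy inequality for all orders `m` in the sequence `s`. -/
def SPGOnWith (seq : ℕ → ℕ) (s : ℕ → ℕ) (C : ℝ) : Prop :=
  ∀ x : X, ∀ i : ℕ, ∀ A : Finset ℕ, A.card = s i → B.IsGreedySet x A →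
    ∀ k : ℕ, k ≤ s i → ‖x - B.proj A x‖ ≤ C * ‖x - B.projSeq seq k x‖

/-- `𝓑` is (`λ`, `𝐧`, strong partially greedy). -/
def LamSPG (seq : ℕ → ℕ) (lam : ℝ) : Prop :=
  ∃ C : ℝ, 1 ≤ C ∧ ∀ x : X, ∀ m : ℕ, 1 ≤ m →
    ∀ A : Finset ℕ, A.card = ⌈lam * (m : ℝ)⌉₊ → B.IsGreedySet x A →
      ∀ k : ℕ, k ≤ m → ‖x - B.proj A x‖ ≤ C * ‖x - B.projSeq seq k x‖

/-- `𝓑` is (`λ`, `𝐧`, PSLC). -/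
def LamPSLC (seq : ℕ → ℕ) (lam : ℝ) : Prop :=
  ∃ C : ℝ, 1 ≤ C ∧ ∀ x : X, (∀ n, ‖B.coord n x‖ ≤ 1) →
    ∀ A D : Finset ℕ, (↑A : Set ℕ) ⊆ Set.range seq → A.card ≤ D.card →
      (lam - 1) * (iotaMax seq A : ℝ) + A.card ≤ D.card →
      (∀ d ∈ D, B.coord d x = 0) →
      (∀ a ∈ A, ∀ j : ℕ, (j ∈ D ∨ B.coord j x ≠ 0) → j ∈ Set.range seq → a < j) →
      ∀ ε δ : ℕ → 𝕜, (∀ n, ‖ε n‖ = 1) → (∀ n, ‖δ n‖ = 1) →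
        ‖x + B.sgnSum ε A‖ ≤ C * ‖x + B.sgnSum δ D‖

/-- `𝓑` is (`λ`, `𝐧`, superconservative). -/
def LamSuperconservative (seq : ℕ → ℕ) (lam : ℝ) : Prop :=
  ∃ C : ℝ, 0 < C ∧ ∀ A D : Finset ℕ, TPair seq A D →
    (lam - 1) * (iotaMax seq A : ℝ) + A.card ≤ D.card →
    ∀ ε δ : ℕ → 𝕜, (∀ n, ‖ε n‖ = 1) → (∀ n, ‖δ n‖ = 1) →
      ‖B.sgnSum ε A‖ ≤ C * ‖B.sgnSum δ D‖

/-- `𝓑` is (`λ`, `𝐧`, conservative). -/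
def LamConservative (seq : ℕ → ℕ) (lam : ℝ) : Prop :=
  ∃ C : ℝ, 0 < C ∧ ∀ A D : Finset ℕ, TPair seq A D →
    (lam - 1) * (iotaMax seq A : ℝ) + A.card ≤ D.card →
    ‖B.ones A‖ ≤ C * ‖B.ones D‖

/-- `𝓑` is `ω`-(`𝐧`, strong partially greedy) for the weight on sets `w`. -/
def WSPG (seq : ℕ → ℕ) (w : Set ℕ → ℝ≥0∞) : Prop :=
  ∃ C : ℝ, 1 ≤ C ∧ ∀ x : X, ∀ m : ℕ, 1 ≤ m → ∀ A : Finset ℕ, A.card = m →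
    B.IsGreedySet x A → ∀ m' : ℕ,
      w (↑((Finset.range m').image seq \ A) : Set ℕ) ≤
        w (↑(A \ (Finset.range m').image seq) : Set ℕ) →
      ‖x - B.proj A x‖ ≤ C * ‖x - B.proj ((Finset.range m').image seq) x‖

/-- `𝓑` is `ω`-(`𝐧`, PSLC). -/
def WPSLC (seq : ℕ → ℕ) (w : Set ℕ → ℝ≥0∞) : Prop :=
  ∃ C : ℝ, 1 ≤ C ∧ ∀ x : X, (∀ n, ‖B.coord n x‖ ≤ 1) →
    ∀ A D : Finset ℕ, WTPair w seq A D →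
      (∀ d ∈ D, B.coord d x = 0) →
      (∀ a ∈ A, ∀ j : ℕ, (j ∈ D ∨ B.coord j x ≠ 0) → j ∈ Set.range seq → a < j) →
      ∀ ε δ : ℕ → 𝕜, (∀ n, ‖ε n‖ = 1) → (∀ n, ‖δ n‖ = 1) →
        ‖x + B.sgnSum ε A‖ ≤ C * ‖x + B.sgnSum δ D‖

/-- `𝓑` is `ω`-(`𝐧`, superconservative). -/
def WSuperconservative (seq : ℕ → ℕ) (w : Set ℕ → ℝ≥0∞) : Prop :=
  ∃ C : ℝ, 0 < C ∧ ∀ A D : Finset ℕ, WTPair w seq A D →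
    ∀ ε δ : ℕ → 𝕜, (∀ n, ‖ε n‖ = 1) → (∀ n, ‖δ n‖ = 1) →
      ‖B.sgnSum ε A‖ ≤ C * ‖B.sgnSum δ D‖

/-- `𝓑` is `ω`-(`𝐧`, conservative). -/
def WConservative (seq : ℕ → ℕ) (w : Set ℕ → ℝ≥0∞) : Prop :=
  ∃ C : ℝ, 0 < C ∧ ∀ A D : Finset ℕ, WTPair w seq A D → ‖B.ones A‖ ≤ C * ‖B.ones D‖

end BasisOf

/-- A Banach space over `𝕜` equipped with a basis. -/
structure BanachWithBasis (𝕜 : Type*) [RCLike 𝕜] where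
  carrier : Type
  [grp : NormedAddCommGroup carrier]
  [mod : NormedSpace 𝕜 carrier]
  [comp : CompleteSpace carrier]
  basis : BasisOf 𝕜 carrier

attribute [instance] BanachWithBasis.grp BanachWithBasis.mod BanachWithBasis.comp

/-!
Strong partial greediness with `m' = 0` is quasi-greediness. For PSLC, complete
`x + 1_{εA} + 1_{δD}` by ones on `B_{m'} \ A`, where `B_{m'}` is the shortest initial segment of
`𝐧` containing `A`: then `D ∪ (B_{m'} \ A)` is a greedy set whose comparison with `B_{m'}` is
exactly the PSLC inequality. PSLC ⇒ superconservative ⇒ conservative by specialisation.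

Conversely, `x - P_A x = (x - P_{B_{m'}} x) + P_{B_{m'} \ A} x - P_{A \ B_{m'}} x`. The last term
is a greedy projection of `x - P_{B_{m'}} x`. The coefficients of the middle one are bounded by
`α = min_{A \ B_{m'}} |e_n^*(x)|`, so it is `≲ α ‖1_{B_{m'} \ A}‖`; conservativity applied to
`(B_{m'} \ A, A \ B_{m'}) ∈ 𝕋^ω(𝐧)` turns this into `α ‖1_{A \ B_{m'}}‖`, and the truncation
estimate of quasi-greedy bases (Abel summation over level sets) bounds that by
`‖x - P_{B_{m'}} x‖`.
-/

section AbelSummation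

variable {𝕜 E ι : Type*} [RCLike 𝕜] [SeminormedAddCommGroup E] [NormedSpace 𝕜 E]

theorem norm_sum_ofReal_smul_le_of_superlevel (v : ι → E) (S : Finset ι) (t : ι → ℝ) {β M : ℝ}
    (hβ : 0 ≤ β) (ht : ∀ n ∈ S, 0 ≤ t n ∧ t n ≤ β)
    (hM : ∀ τ, ‖∑ n ∈ S with τ < t n, v n‖ ≤ M) :
    ‖∑ n ∈ S, (t n : 𝕜) • v n‖ ≤ β * M := by
  induction S using Finset.strongInduction generalizing t β with
  | H S ih =>
  rcases S.eq_empty_or_nonempty with rfl | hS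
  · simpa using mul_nonneg hβ (by simpa using hM 0)
  obtain ⟨n₀, hn₀, hmin⟩ := Finset.exists_min_image S t hS
  set τ := t n₀
  set S' := S.filter (τ < t ·)
  have hS' : S' ⊂ S := Finset.filter_ssubset.2 ⟨n₀, hn₀, lt_irrefl τ⟩
  have hsplit : ∑ n ∈ S, (t n : 𝕜) • v n
      = ∑ n ∈ S', ((t n - τ : ℝ) : 𝕜) • v n + (τ : 𝕜) • ∑ n ∈ S, v n := by
    rw [Finset.sum_filter_of_ne (p := (τ < t ·)), Finset.smul_sum, ← Finset.sum_add_distrib]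
    · refine Finset.sum_congr rfl fun n _ => ?_
      rw [← add_smul]; push_cast; ring_nf
    · intro n hn hne
      by_contra hle
      exact hne (by rw [le_antisymm (not_lt.1 hle) (hmin n hn)]; simp)
  have hlevel : ∀ σ, S'.filter (σ < t · - τ) = S.filter (max σ 0 + τ < t ·) := by
    intro σ
    rw [Finset.filter_filter]
    refine Finset.filter_congr fun n _ => ?_
    constructor
    · rintro ⟨h1, h2⟩; rw [max_def]; split_ifs <;> linarith
    · intro h; constructor <;> linarith [le_max_left σ 0, le_max_right σ 0]
  have hτ : 0 ≤ τ := (ht n₀ hn₀).1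
  have h₁ : ‖∑ n ∈ S', ((t n - τ : ℝ) : 𝕜) • v n‖ ≤ (β - τ) * M :=
    ih S' hS' (t · - τ) (by linarith [(ht n₀ hn₀).2])
      (fun n hn => by
        have := (Finset.mem_filter.1 hn).2
        constructor <;> linarith [(ht n (Finset.filter_subset _ _ hn)).2])
      (fun σ => by rw [hlevel]; exact hM _)
  have h₂ : ‖∑ n ∈ S, v n‖ ≤ M := by
    simpa only [Finset.filter_true_of_mem fun n hn => show τ - 1 < t n by linarith [hmin n hn]]
      using hM (τ - 1)
  calc ‖∑ n ∈ S, (t n : 𝕜) • v n‖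
      ≤ (β - τ) * M + τ * M := by
        rw [hsplit]
        refine (norm_add_le _ _).trans (add_le_add h₁ ?_)
        rw [norm_smul, RCLike.norm_ofReal, abs_of_nonneg hτ]
        exact mul_le_mul_of_nonneg_left h₂ hτ
    _ = β * M := by ring

variable {v : ι → E} {S : Finset ι} {M α : ℝ}

theorem norm_sum_ofReal_smul_le (hM : ∀ T ⊆ S, ‖∑ n ∈ T, v n‖ ≤ M) (hα : 0 ≤ α) (r : ι → ℝ)
    (hr : ∀ n ∈ S, |r n| ≤ α) : ‖∑ n ∈ S, (r n : 𝕜) • v n‖ ≤ 2 * α * M := by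
  have hpart : ∀ s : ι → ℝ, (∀ n ∈ S, 0 ≤ s n ∧ s n ≤ α) →
      ‖∑ n ∈ S, (s n : 𝕜) • v n‖ ≤ α * M := fun s hs =>
    norm_sum_ofReal_smul_le_of_superlevel v S s hα hs fun _ => hM _ (Finset.filter_subset _ _)
  have hsplit : ∑ n ∈ S, (r n : 𝕜) • v n
      = ∑ n ∈ S, ((max (r n) 0 : ℝ) : 𝕜) • v n - ∑ n ∈ S, ((max (-r n) 0 : ℝ) : 𝕜) • v n := by
    rw [← Finset.sum_sub_distrib]
    refine Finset.sum_congr rfl fun n _ => ?_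
    rw [← sub_smul, ← RCLike.ofReal_sub, max_zero_sub_max_neg_zero_eq_self]
  rw [hsplit, two_mul, add_mul]
  refine (norm_sub_le _ _).trans (add_le_add (hpart _ fun n hn => ?_) (hpart _ fun n hn => ?_))
  all_goals
    have := abs_le.1 (hr n hn)
    exact ⟨le_max_right _ _, max_le (by linarith) hα⟩

theorem norm_sum_smul_le (hM : ∀ T ⊆ S, ‖∑ n ∈ T, v n‖ ≤ M) (hα : 0 ≤ α) (d : ι → 𝕜)
    (hd : ∀ n ∈ S, ‖d n‖ ≤ α) : ‖∑ n ∈ S, d n • v n‖ ≤ 4 * α * M := by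
  have hI : ‖(RCLike.I : 𝕜)‖ ≤ 1 := by rw [RCLike.norm_I]; split_ifs <;> norm_num
  have hsplit : ∑ n ∈ S, d n • v n = ∑ n ∈ S, (RCLike.re (d n) : 𝕜) • v n
      + (RCLike.I : 𝕜) • ∑ n ∈ S, (RCLike.im (d n) : 𝕜) • v n := by
    rw [Finset.smul_sum, ← Finset.sum_add_distrib]
    refine Finset.sum_congr rfl fun n _ => ?_
    rw [smul_smul, ← add_smul, mul_comm, RCLike.re_add_im]
  have hre := norm_sum_ofReal_smul_le (𝕜 := 𝕜) hM hα (RCLike.re ∘ d)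
    fun n hn => (RCLike.abs_re_le_norm _).trans (hd n hn)
  have him := norm_sum_ofReal_smul_le (𝕜 := 𝕜) hM hα (RCLike.im ∘ d)
    fun n hn => (RCLike.abs_im_le_norm _).trans (hd n hn)
  rw [hsplit]
  calc _ ≤ 2 * α * M + 1 * (2 * α * M) := by
        refine (norm_add_le _ _).trans (add_le_add hre ?_)
        rw [norm_smul]
        exact mul_le_mul hI him (norm_nonneg _) zero_le_one
    _ = 4 * α * M := by ring

end AbelSummation

theorem eq_empty_of_weight_le_weight_empty {w : Set ℕ → ℝ≥0∞} (hw0 : w ∅ = 0)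
    (hwpos : ∀ A : Set ℕ, A.Nonempty → 0 < w A) {A : Finset ℕ}
    (h : w (↑A : Set ℕ) ≤ w (↑(∅ : Finset ℕ) : Set ℕ)) : A = ∅ := by
  rw [Finset.coe_empty, hw0, nonpos_iff_eq_zero] at h
  by_contra hA
  exact (hwpos _ (Finset.coe_nonempty.2 (Finset.nonempty_iff_ne_empty.2 hA))).ne' h

theorem exists_image_range_cover {seq : ℕ → ℕ} (hseq : Monotone seq) {A : Finset ℕ}
    (hA : (↑A : Set ℕ) ⊆ Set.range seq) :
    ∃ m, A ⊆ (Finset.range m).image seq ∧ ∀ b ∈ (Finset.range m).image seq, ∃ a ∈ A, b ≤ a := by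
  induction A using Finset.induction_on with
  | empty => exact ⟨0, by simp, by simp⟩
  | insert a A _ ih =>
    obtain ⟨m, hcover, hle⟩ := ih fun b hb => hA (Finset.mem_insert_of_mem hb)
    obtain ⟨i, rfl⟩ := hA (Finset.mem_insert_self a A)
    refine ⟨max m (i + 1), Finset.insert_subset ?_ ?_, ?_⟩
    · exact Finset.mem_image_of_mem seq (Finset.mem_range.2 (by omega))
    · exact hcover.trans (Finset.image_subset_image (Finset.range_subset_range.2 (le_max_left _ _)))
    · simp only [Finset.mem_image, Finset.mem_range]
      rintro _ ⟨j, hj, rfl⟩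
      by_cases hjm : j < m
      · obtain ⟨a, ha, hja⟩ := hle _ (Finset.mem_image_of_mem seq (Finset.mem_range.2 hjm))
        exact ⟨a, Finset.mem_insert_of_mem ha, hja⟩
      · exact ⟨seq i, Finset.mem_insert_self _ _, hseq (by omega)⟩

theorem exists_image_range_cover_of_lt {seq : ℕ → ℕ} (hseq : Monotone seq) {A : Finset ℕ}
    (hA : (↑A : Set ℕ) ⊆ Set.range seq) {P : ℕ → Prop}
    (hP : ∀ a ∈ A, ∀ j ∈ Set.range seq, P j → a < j) :
    ∃ m, A ⊆ (Finset.range m).image seq ∧ ∀ b ∈ (Finset.range m).image seq, ¬ P b := by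
  obtain ⟨m, hcover, hle⟩ := exists_image_range_cover hseq hA
  refine ⟨m, hcover, fun b hb hPb => ?_⟩
  obtain ⟨a, ha, hba⟩ := hle b hb
  obtain ⟨i, -, rfl⟩ := Finset.mem_image.1 hb
  exact (hP a ha _ ⟨i, rfl⟩ hPb).not_ge hba

theorem Finset.sdiff_union_sdiff_eq_of_subset {α : Type*} [DecidableEq α] {A S D : Finset α}
    (hA : A ⊆ S) (hD : Disjoint S D) : S \ (D ∪ (S \ A)) = A := by
  ext n
  have := @hA n
  have : n ∈ S → n ∉ D := fun h => Finset.disjoint_left.1 hD h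
  simp only [Finset.mem_sdiff, Finset.mem_union]
  tauto

theorem Finset.union_sdiff_sdiff_eq_of_disjoint {α : Type*} [DecidableEq α] {A S D : Finset α}
    (hD : Disjoint S D) : (D ∪ (S \ A)) \ S = D := by
  ext n
  have : n ∈ S → n ∉ D := fun h => Finset.disjoint_left.1 hD h
  simp only [Finset.mem_sdiff, Finset.mem_union]
  tauto

theorem lt_of_mem_image_range {seq : ℕ → ℕ} (hseq : StrictMono seq) {m b j : ℕ}
    (hb : b ∈ (Finset.range m).image seq) (hj : seq j ∉ (Finset.range m).image seq) :
    b < seq j := by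
  obtain ⟨i, hi, rfl⟩ := Finset.mem_image.1 hb
  exact hseq ((Finset.mem_range.1 hi).trans_le
    (not_lt.1 fun h => hj (Finset.mem_image_of_mem seq (Finset.mem_range.2 h))))

theorem wTPair_sdiff {seq : ℕ → ℕ} (hseq : StrictMono seq) {w : Set ℕ → ℝ≥0∞} {m : ℕ}
    {A : Finset ℕ}
    (hw : w (↑((Finset.range m).image seq \ A) : Set ℕ) ≤
      w (↑(A \ (Finset.range m).image seq) : Set ℕ)) :
    WTPair w seq ((Finset.range m).image seq \ A) (A \ (Finset.range m).image seq) := by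
  refine ⟨fun b hb => ?_, hw, fun b hb d hd hdseq => ?_⟩
  · obtain ⟨i, -, rfl⟩ := Finset.mem_image.1 (Finset.mem_sdiff.1 hb).1
    exact ⟨i, rfl⟩
  · obtain ⟨j, rfl⟩ := hdseq
    exact lt_of_mem_image_range hseq (Finset.mem_sdiff.1 hb).1 (Finset.mem_sdiff.1 hd).2

namespace BasisOf

variable {𝕜 X : Type*} [RCLike 𝕜] [NormedAddCommGroup X] [NormedSpace 𝕜 X] (B : BasisOf 𝕜 X)

theorem coord_sgnSum (c : ℕ → 𝕜) (F : Finset ℕ) (n : ℕ) :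
    B.coord n (B.sgnSum c F) = if n ∈ F then c n else 0 := by
  simp only [sgnSum, map_sum, map_smul, B.biorth, smul_eq_mul, mul_ite, mul_one, mul_zero]
  exact Finset.sum_ite_eq F n c

theorem ones_eq_sgnSum (F : Finset ℕ) : B.ones F = B.sgnSum 1 F := by
  simp [ones, sgnSum]

theorem coord_ones (F : Finset ℕ) (n : ℕ) : B.coord n (B.ones F) = if n ∈ F then 1 else 0 := by
  rw [ones_eq_sgnSum, coord_sgnSum, Pi.one_apply]

theorem coord_sub_proj (x : X) (S : Finset ℕ) (n : ℕ) :
    B.coord n (x - B.proj S x) = if n ∈ S then 0 else B.coord n x := by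
  rw [map_sub, proj, ← sgnSum, coord_sgnSum]
  split_ifs <;> simp

theorem proj_union (x : X) {S T : Finset ℕ} (h : Disjoint S T) :
    B.proj (S ∪ T) x = B.proj S x + B.proj T x :=
  Finset.sum_union h

theorem proj_eq_sgnSum {x : X} {S : Finset ℕ} {c : ℕ → 𝕜} (h : ∀ n ∈ S, B.coord n x = c n) :
    B.proj S x = B.sgnSum c S :=
  Finset.sum_congr rfl fun n hn => by rw [h n hn]

theorem sub_proj_eq (x : X) (A S : Finset ℕ) :
    x - B.proj A x = (x - B.proj S x) + B.proj (S \ A) x - B.proj (A \ S) x := by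
  have h : B.proj A x + B.proj (S \ A) x = B.proj S x + B.proj (A \ S) x := by
    rw [← proj_union B x Finset.disjoint_sdiff, ← proj_union B x Finset.disjoint_sdiff,
      Finset.union_sdiff_self_eq_union, Finset.union_sdiff_self_eq_union, Finset.union_comm]
  rw [eq_sub_of_add_eq h.symm]
  abel

theorem proj_sub_proj_of_disjoint (x : X) {S T : Finset ℕ} (h : Disjoint T S) :
    B.proj T (x - B.proj S x) = B.proj T x :=
  proj_eq_sgnSum B fun n hn => by rw [coord_sub_proj, if_neg (Finset.disjoint_left.1 h hn)]

variable {B}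

theorem IsGreedySet.sub_proj_sdiff {x : X} {A : Finset ℕ} (hA : B.IsGreedySet x A)
    (S : Finset ℕ) : B.IsGreedySet (x - B.proj S x) (A \ S) := by
  intro a ha b hb
  rw [coord_sub_proj, coord_sub_proj, if_neg (Finset.mem_sdiff.1 ha).2]
  split_ifs with hbS
  · simp
  · exact hA a (Finset.mem_sdiff.1 ha).1 b fun hbA => hb (Finset.mem_sdiff.2 ⟨hbA, hbS⟩)

theorem IsGreedySet.sdiff_filter {z : X} {G : Finset ℕ} (hG : B.IsGreedySet z G) {α : ℝ}
    (hα : 0 < α) (hpos : ∀ n ∈ G, 0 < ‖B.coord n z‖) (τ : ℝ) :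
    B.IsGreedySet z (G \ G.filter (τ < α / ‖B.coord · z‖)) := by
  intro a ha b hb
  obtain ⟨haG, haT⟩ := Finset.mem_sdiff.1 ha
  by_cases hbG : b ∈ G
  · have hbT : τ < α / ‖B.coord b z‖ := by
      by_contra h
      exact hb (Finset.mem_sdiff.2 ⟨hbG, fun hbT => h (Finset.mem_filter.1 hbT).2⟩)
    have haT' : α / ‖B.coord a z‖ ≤ τ := not_lt.1 fun h => haT (Finset.mem_filter.2 ⟨haG, h⟩)
    exact ((div_lt_div_iff_of_pos_left hα (hpos a haG) (hpos b hbG)).1 (haT'.trans_lt hbT)).le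
  · exact hG a haG b hbG

theorem exists_quasiGreedyWith_nonneg (h : B.QuasiGreedy) : ∃ K, 0 ≤ K ∧ B.QuasiGreedyWith K :=
  let ⟨K, hK⟩ := h
  ⟨max K 0, le_max_right _ _, fun x A hA hg =>
    (hK x A hA hg).trans (mul_le_mul_of_nonneg_right (le_max_left _ _) (norm_nonneg _))⟩

namespace QuasiGreedyWith

variable {K : ℝ} (hQ : B.QuasiGreedyWith K) (hK : 0 ≤ K)
include hQ hK

theorem norm_proj_le {z : X} {S : Finset ℕ} (hS : B.IsGreedySet z S) :
    ‖B.proj S z‖ ≤ K * ‖z‖ := by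
  rcases S.eq_empty_or_nonempty with rfl | hne
  · simpa [proj] using mul_nonneg hK (norm_nonneg z)
  · exact hQ z S hne hS

theorem norm_sgnSum_subset_le {c : ℕ → 𝕜} {F T : Finset ℕ} (hc : ∀ n ∈ F, ‖c n‖ = 1)
    (hT : T ⊆ F) : ‖B.sgnSum c T‖ ≤ K * ‖B.sgnSum c F‖ := by
  have hg : B.IsGreedySet (B.sgnSum c F) T := fun a ha b _ => by
    rw [coord_sgnSum, coord_sgnSum, if_pos (hT ha), hc a (hT ha)]
    split_ifs with hb
    exacts [(hc b hb).le, by simp]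
  rw [← proj_eq_sgnSum B fun n hn => by rw [coord_sgnSum, if_pos (hT hn)]]
  exact hQ.norm_proj_le hK hg

theorem norm_sgnSum_le_of_flat {c d : ℕ → 𝕜} {F : Finset ℕ} {α : ℝ} (hα : 0 ≤ α)
    (hc : ∀ n ∈ F, ‖c n‖ = 1) (hd : ∀ n ∈ F, ‖d n‖ ≤ α) :
    ‖B.sgnSum d F‖ ≤ 4 * α * (K * ‖B.sgnSum c F‖) := by
  have hc0 : ∀ n ∈ F, c n ≠ 0 := fun n hn h => by simpa [h] using hc n hn
  have hrw : B.sgnSum d F = ∑ n ∈ F, (d n / c n) • (c n • B.e n) :=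
    Finset.sum_congr rfl fun n hn => by rw [smul_smul, div_mul_cancel₀ _ (hc0 n hn)]
  rw [hrw]
  refine norm_sum_smul_le (fun T hT => hQ.norm_sgnSum_subset_le hK hc hT) hα _ fun n hn => ?_
  rw [norm_div, hc n hn, div_one]
  exact hd n hn

theorem norm_sgnSum_le_mul_ones {d : ℕ → 𝕜} {F : Finset ℕ} {α : ℝ} (hα : 0 ≤ α)
    (hd : ∀ n ∈ F, ‖d n‖ ≤ α) : ‖B.sgnSum d F‖ ≤ 4 * K * α * ‖B.ones F‖ := by
  have := hQ.norm_sgnSum_le_of_flat hK (c := 1) hα (fun _ _ => norm_one) hd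
  rw [ones_eq_sgnSum]
  linarith

theorem norm_proj_le_of_sdiff {z : X} {G T : Finset ℕ} (hG : B.IsGreedySet z G) (hT : T ⊆ G)
    (hGT : B.IsGreedySet z (G \ T)) : ‖B.proj T z‖ ≤ 2 * K * ‖z‖ := by
  have hsplit : B.proj T z = B.proj G z - B.proj (G \ T) z := by
    rw [eq_sub_iff_add_eq', ← proj_union B z Finset.sdiff_disjoint,
      Finset.sdiff_union_of_subset hT]
  rw [hsplit, two_mul, add_mul]
  exact (norm_sub_le _ _).trans (add_le_add (hQ.norm_proj_le hK hG) (hQ.norm_proj_le hK hGT))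

theorem mul_norm_ones_le {z : X} {G : Finset ℕ} (hG : B.IsGreedySet z G) {α : ℝ} (hα : 0 ≤ α)
    (hαG : ∀ n ∈ G, α ≤ ‖B.coord n z‖) : α * ‖B.ones G‖ ≤ 8 * K ^ 2 * ‖z‖ := by
  rcases hα.eq_or_lt with rfl | hα
  · simpa using by positivity
  have hpos : ∀ n ∈ G, 0 < ‖B.coord n z‖ := fun n hn => hα.trans_le (hαG n hn)
  set ε : ℕ → 𝕜 := fun n => (‖B.coord n z‖ : 𝕜)⁻¹ * B.coord n z
  have hε : ∀ n ∈ G, ‖ε n‖ = 1 := fun n hn => by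
    simp only [ε, norm_mul, norm_inv, RCLike.norm_ofReal, abs_norm]
    exact inv_mul_cancel₀ (hpos n hn).ne'
  have hones : ‖B.ones G‖ ≤ 4 * K * ‖B.sgnSum ε G‖ := by
    have := hQ.norm_sgnSum_le_of_flat hK (d := 1) zero_le_one hε fun _ _ => norm_one.le
    rw [ones_eq_sgnSum]
    linarith
  -- Abel summation against the decreasing weights `α / |e_n^*(z)| ≤ 1`: the superlevel sets
  -- are the smallest coefficients of `G`, whose complements in `G` are again greedy.
  have hlevel : ∀ τ : ℝ, ‖∑ n ∈ G with τ < α / ‖B.coord n z‖, B.coord n z • B.e n‖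
      ≤ 2 * K * ‖z‖ := by
    intro τ
    exact hQ.norm_proj_le_of_sdiff hK hG (Finset.filter_subset _ _) (hG.sdiff_filter hα hpos τ)
  have habel : α * ‖B.sgnSum ε G‖ ≤ 2 * K * ‖z‖ := by
    have h := norm_sum_ofReal_smul_le_of_superlevel (𝕜 := 𝕜) (fun n => B.coord n z • B.e n) G
      (fun n => α / ‖B.coord n z‖) zero_le_one
      (fun n hn => ⟨(div_pos hα (hpos n hn)).le, (div_le_one (hpos n hn)).2 (hαG n hn)⟩) hlevel
    have hrw : ∑ n ∈ G, ((α / ‖B.coord n z‖ : ℝ) : 𝕜) • (B.coord n z • B.e n)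
        = (α : 𝕜) • B.sgnSum ε G := by
      rw [sgnSum, Finset.smul_sum]
      refine Finset.sum_congr rfl fun n _ => ?_
      simp only [ε, smul_smul]
      push_cast
      ring_nf
    rwa [hrw, one_mul, norm_smul, RCLike.norm_ofReal, abs_of_pos hα] at h
  calc α * ‖B.ones G‖ ≤ α * (4 * K * ‖B.sgnSum ε G‖) := mul_le_mul_of_nonneg_left hones hα.le
    _ = 4 * K * (α * ‖B.sgnSum ε G‖) := by ring
    _ ≤ 4 * K * (2 * K * ‖z‖) := mul_le_mul_of_nonneg_left habel (by positivity)
    _ = 8 * K ^ 2 * ‖z‖ := by ring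

end QuasiGreedyWith

variable {seq : ℕ → ℕ} {w : Set ℕ → ℝ≥0∞}

theorem WSPG.quasiGreedy (hw0 : w ∅ = 0) (h : B.WSPG seq w) : B.QuasiGreedy := by
  obtain ⟨C, -, hC⟩ := h
  refine ⟨1 + C, fun x A hA hg => ?_⟩
  have h0 : ‖x - B.proj A x‖ ≤ C * ‖x‖ := by
    simpa [proj] using hC x A.card (Finset.card_pos.2 hA) A rfl hg 0 (by simp [hw0])
  calc ‖B.proj A x‖ = ‖x - (x - B.proj A x)‖ := by rw [sub_sub_cancel]
    _ ≤ ‖x‖ + C * ‖x‖ := (norm_sub_le _ _).trans (by linarith)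
    _ = (1 + C) * ‖x‖ := by ring

theorem WPSLC.wSuperconservative (h : B.WPSLC seq w) : B.WSuperconservative seq w := by
  obtain ⟨C, hC1, hC⟩ := h
  refine ⟨C, by linarith, fun A D hAD ε δ hε hδ => ?_⟩
  simpa using hC 0 (by simp) A D hAD (by simp)
    (fun a ha j hj hjseq => hAD.2.2 a ha j (by simpa using hj) hjseq) ε δ hε hδ

theorem WSuperconservative.wConservative (h : B.WSuperconservative seq w) :
    B.WConservative seq w := by
  obtain ⟨C, hC0, hC⟩ := h
  refine ⟨C, hC0, fun A D hAD => ?_⟩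
  simpa only [ones_eq_sgnSum] using hC A D hAD 1 1 (fun _ => norm_one) (fun _ => norm_one)

/-- The witness is `z = x + 1_{εA} + 1_{δD} + 1_{S \ A}` with `G = D ∪ (S \ A)`. -/
theorem exists_isGreedySet_residuals {x : X} (hx : ∀ n, ‖B.coord n x‖ ≤ 1) {A D S : Finset ℕ}
    (hAS : A ⊆ S) (hS : ∀ n ∈ S, n ∉ D ∧ B.coord n x = 0) (hD0 : ∀ d ∈ D, B.coord d x = 0)
    {ε δ : ℕ → 𝕜} (hε : ∀ n, ‖ε n‖ = 1) (hδ : ∀ n, ‖δ n‖ = 1) :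
    ∃ z G, D ⊆ G ∧ B.IsGreedySet z G ∧ S \ G = A ∧ G \ S = D ∧
      z - B.proj G z = x + B.sgnSum ε A ∧ z - B.proj S z = x + B.sgnSum δ D := by
  set E := S \ A
  set z := x + B.sgnSum ε A + B.sgnSum δ D + B.ones E with hz
  have hcoord : ∀ n, B.coord n z = B.coord n x + (if n ∈ A then ε n else 0)
      + (if n ∈ D then δ n else 0) + (if n ∈ E then 1 else 0) := fun n => by
    simp only [z, map_add, coord_sgnSum, coord_ones]
  have hzA : ∀ n ∈ A, B.coord n z = ε n := fun n hn => by
    simp [hcoord, hn, E, (hS n (hAS hn)).1, (hS n (hAS hn)).2]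
  have hzD : ∀ n ∈ D, B.coord n z = δ n := fun n hn => by
    have hnS : n ∉ S := fun h => (hS n h).1 hn
    have hnA : n ∉ A := fun h => hnS (hAS h)
    simp [hcoord, hn, hD0 n hn, E, hnS, hnA]
  have hzE : ∀ n ∈ E, B.coord n z = 1 := fun n hn => by
    obtain ⟨hnS, hnA⟩ := Finset.mem_sdiff.1 hn
    simp [hcoord, hn, hnA, (hS n hnS).1, (hS n hnS).2]
  have hSD : Disjoint S D := Finset.disjoint_left.2 fun n hn => (hS n hn).1
  have hDE : Disjoint D E := hSD.symm.mono_right Finset.sdiff_subset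
  refine ⟨z, D ∪ E, Finset.subset_union_left, fun a ha b hb => ?_,
    Finset.sdiff_union_sdiff_eq_of_subset hAS hSD, Finset.union_sdiff_sdiff_eq_of_disjoint hSD,
    ?_, ?_⟩
  · have hza : ‖B.coord a z‖ = 1 := by
      rcases Finset.mem_union.1 ha with h | h
      · rw [hzD a h, hδ]
      · rw [hzE a h, norm_one]
    rw [hza]
    by_cases hbA : b ∈ A
    · rw [hzA b hbA, hε]
    · simp only [Finset.mem_union, not_or] at hb
      simpa [hcoord, hbA, hb.1, hb.2] using hx b
  · rw [proj_union B z hDE, proj_eq_sgnSum B hzD, proj_eq_sgnSum (c := 1) B hzE,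
      ← ones_eq_sgnSum, hz]
    abel
  · rw [← Finset.union_sdiff_of_subset hAS, proj_union B z Finset.disjoint_sdiff,
      proj_eq_sgnSum B hzA, proj_eq_sgnSum (c := 1) B hzE, ← ones_eq_sgnSum, hz]
    abel

theorem WSPG.wPSLC (hseq : StrictMono seq) (hw0 : w ∅ = 0)
    (hwpos : ∀ A : Set ℕ, A.Nonempty → 0 < w A) (h : B.WSPG seq w) : B.WPSLC seq w := by
  obtain ⟨C, hC1, hC⟩ := h
  refine ⟨C, hC1, fun x hx A D ⟨hAseq, hwAD, _⟩ hD0 hord ε δ hε hδ => ?_⟩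
  rcases D.eq_empty_or_nonempty with rfl | hDne
  · obtain rfl := eq_empty_of_weight_le_weight_empty hw0 hwpos hwAD
    simpa [sgnSum] using le_mul_of_one_le_left (norm_nonneg x) hC1
  obtain ⟨m', hcover, hS⟩ := exists_image_range_cover_of_lt hseq.monotone hAseq
    (P := fun j => j ∈ D ∨ B.coord j x ≠ 0) fun a ha j hj hP => hord a ha j hP hj
  simp only [not_or, not_not] at hS
  obtain ⟨z, G, hDG, hG, hSG, hGS, hGz, hSz⟩ :=
    exists_isGreedySet_residuals hx hcover hS hD0 hε hδ
  have key := hC z G.card (Finset.card_pos.2 (hDne.mono hDG)) G rfl hG m'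
    (by rw [hSG, hGS]; exact hwAD)
  rwa [hGz, hSz] at key

theorem WConservative.wSPG (hseq : StrictMono seq) (hw0 : w ∅ = 0)
    (hwpos : ∀ A : Set ℕ, A.Nonempty → 0 < w A) (hQG : B.QuasiGreedy)
    (hcons : B.WConservative seq w) : B.WSPG seq w := by
  obtain ⟨K, hK, hQ⟩ := exists_quasiGreedyWith_nonneg hQG
  obtain ⟨Cc, hCc, hcons⟩ := hcons
  have hC1 : 1 ≤ 1 + K + 32 * K ^ 3 * Cc := by
    have : 0 ≤ K + 32 * K ^ 3 * Cc := by positivity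
    linarith
  refine ⟨1 + K + 32 * K ^ 3 * Cc, hC1, ?_⟩
  intro x m _ A _ hgA m' hw
  set Bs := (Finset.range m').image seq
  set y := x - B.proj Bs x
  have hy : 0 ≤ ‖y‖ := norm_nonneg y
  rcases (A \ Bs).eq_empty_or_nonempty with hABs | hABs
  · have hBsA : Bs \ A = ∅ := eq_empty_of_weight_le_weight_empty hw0 hwpos (hABs ▸ hw)
    obtain rfl : A = Bs := Finset.Subset.antisymm (Finset.sdiff_eq_empty_iff_subset.1 hABs)
      (Finset.sdiff_eq_empty_iff_subset.1 hBsA)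
    exact le_mul_of_one_le_left hy hC1
  obtain ⟨a₀, ha₀, hmin⟩ := (A \ Bs).exists_min_image (‖B.coord · x‖) hABs
  set α := ‖B.coord a₀ x‖
  have hgy : B.IsGreedySet y (A \ Bs) := hgA.sub_proj_sdiff Bs
  have hyA : ∀ n ∈ A \ Bs, B.coord n y = B.coord n x := fun n hn => by
    rw [coord_sub_proj, if_neg (Finset.mem_sdiff.1 hn).2]
  have hlow : ‖B.proj (A \ Bs) x‖ ≤ K * ‖y‖ := by
    rw [← proj_sub_proj_of_disjoint B x Finset.sdiff_disjoint]
    exact hQ.norm_proj_le hK hgy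
  have hhigh : ‖B.proj (Bs \ A) x‖ ≤ 4 * K * α * ‖B.ones (Bs \ A)‖ :=
    hQ.norm_sgnSum_le_mul_ones hK (norm_nonneg _)
      fun n hn => hgA a₀ (Finset.mem_sdiff.1 ha₀).1 n (Finset.mem_sdiff.1 hn).2
  have hpair : WTPair w seq (Bs \ A) (A \ Bs) := wTPair_sdiff hseq hw
  have htrunc : α * ‖B.ones (A \ Bs)‖ ≤ 8 * K ^ 2 * ‖y‖ :=
    hQ.mul_norm_ones_le hK hgy (norm_nonneg _) fun n hn => (hyA n hn).symm ▸ hmin n hn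
  have hmid : ‖B.proj (Bs \ A) x‖ ≤ 32 * K ^ 3 * Cc * ‖y‖ :=
    calc ‖B.proj (Bs \ A) x‖ ≤ 4 * K * α * (Cc * ‖B.ones (A \ Bs)‖) :=
          hhigh.trans (mul_le_mul_of_nonneg_left (hcons _ _ hpair) (by positivity))
      _ = 4 * K * Cc * (α * ‖B.ones (A \ Bs)‖) := by ring
      _ ≤ 4 * K * Cc * (8 * K ^ 2 * ‖y‖) := mul_le_mul_of_nonneg_left htrunc (by positivity)
      _ = 32 * K ^ 3 * Cc * ‖y‖ := by ring
  calc ‖x - B.proj A x‖ ≤ ‖y‖ + ‖B.proj (Bs \ A) x‖ + ‖B.proj (A \ Bs) x‖ := by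
        rw [sub_proj_eq B x A Bs]
        exact (norm_sub_le _ _).trans (add_le_add_left (norm_add_le _ _) _)
    _ ≤ (1 + K + 32 * K ^ 3 * Cc) * ‖y‖ := by linarith

end BasisOf

theorem statement19_general {𝕜 X : Type*} [RCLike 𝕜] [NormedAddCommGroup X] [NormedSpace 𝕜 X]
    (B : BasisOf 𝕜 X) (seq : ℕ → ℕ) (hseq : StrictMono seq)
    (w : Set ℕ → ℝ≥0∞) (hw0 : w ∅ = 0) (hwpos : ∀ A : Set ℕ, A.Nonempty → 0 < w A) :
    (B.WSPG seq w ↔ B.QuasiGreedy ∧ B.WPSLC seq w) ∧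
    (B.WSPG seq w ↔ B.QuasiGreedy ∧ B.WSuperconservative seq w) ∧
    (B.WSPG seq w ↔ B.QuasiGreedy ∧ B.WConservative seq w) := by
  have hforward (h : B.WSPG seq w) : B.QuasiGreedy ∧ B.WPSLC seq w :=
    ⟨h.quasiGreedy hw0, h.wPSLC hseq hw0 hwpos⟩
  have hback (hq : B.QuasiGreedy) (hc : B.WConservative seq w) : B.WSPG seq w :=
    hc.wSPG hseq hw0 hwpos hq
  refine ⟨⟨hforward, fun ⟨hq, h⟩ => hback hq h.wSuperconservative.wConservative⟩,
    ⟨fun h => ⟨(hforward h).1, (hforward h).2.wSuperconservative⟩,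
      fun ⟨hq, h⟩ => hback hq h.wConservative⟩,
    ⟨fun h => ⟨(hforward h).1, (hforward h).2.wSuperconservative.wConservative⟩,
      fun ⟨hq, h⟩ => hback hq h⟩⟩

/-- For a weight on sets `ω`, being ω-(𝐧, strong partially greedy) is
equivalent to being quasi-greedy together with any one of: ω-(𝐧, PSLC),
ω-(𝐧, superconservative), ω-(𝐧, conservative). -/
theorem statement19 {𝕜 X : Type*} [RCLike 𝕜] [NormedAddCommGroup X] [NormedSpace 𝕜 X]
    [CompleteSpace X] (B : BasisOf 𝕜 X) (seq : ℕ → ℕ) (hseq : StrictMono seq)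
    (w : Set ℕ → ℝ≥0∞) (hw0 : w ∅ = 0) (hwpos : ∀ A : Set ℕ, A.Nonempty → 0 < w A) :
    (B.WSPG seq w ↔ B.QuasiGreedy ∧ B.WPSLC seq w) ∧
    (B.WSPG seq w ↔ B.QuasiGreedy ∧ B.WSuperconservative seq w) ∧
    (B.WSPG seq w ↔ B.QuasiGreedy ∧ B.WConservative seq w) :=
  statement19_general B seq hseq w hw0 hwpos
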